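/- Let V be a weight module over Vir[G] on which C acts by a scalar, and let α, β ∈ ℂ with β ∉ {0,1} or α ∉ G. Then the intermediate series module V(α,β,G) is irreducible, and its support equals α + G. -/

import Mathlib

/-!
`d₀` acts diagonally, `d₀ v_y = (α + y) v_y`, with pairwise distinct eigenvalues, so a nonzero
submodule stable under `d₀` contains some `v_y` (apply to a nonzero vector a polynomial in `d₀`
vanishing at the eigenvalues of all but one of its coordinates); this also gives the support.
Since `d_{b-a} v_a = (α + a + (b - a)β) v_b`, the submodule then contains `v_b` whenever this
coefficient is nonzero. For `β ∉ {0, 1}` each of the two coefficients on a path `y → w → z` vanishes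
for only one value of `w`, and `G ≠ 0` is infinite; for `α ∉ G` and `β = 0` (resp. `β = 1`) the
path through `w = z` (resp. `w = y`) has the nonzero coefficients `α + y` and `α + z`. Hence the
submodule contains every `v_z`.
-/

open Finsupp

/-- The action of `d_x` on the intermediate series module `V(α,β,G)` with basis `{v_y : y ∈ G}`:
`d_x v_y = (α + y + xβ) v_{x+y}` (the central element `C` acts by `0`). -/
noncomputable def dActL (G : AddSubgroup ℂ) (α β : ℂ) (x : ↥G) : (↥G →₀ ℂ) →ₗ[ℂ] (↥G →₀ ℂ) :=
  Finsupp.lsum ℂ fun y : ↥G =>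
    LinearMap.toSpanSingleton ℂ (↥G →₀ ℂ) ((α + (y : ℂ) + (x : ℂ) * β) • Finsupp.single (x + y) (1 : ℂ))

open Polynomial

section Diagonal

variable {K ι : Type*} [Field K] {D : Module.End K (ι →₀ K)} {e : ι → K}

theorem aeval_apply_of_diagonal (hD : ∀ v z, D v z = e z * v z) (p : K[X]) (v : ι →₀ K) (z : ι) :
    aeval D p v z = p.eval (e z) * v z := by
  induction p using Polynomial.induction_on with
  | C a => simp [Module.algebraMap_end_apply]
  | add p q hp hq => simp only [map_add, LinearMap.add_apply, Finsupp.add_apply, hp, hq, eval_add,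
      add_mul]
  | monomial n a ih =>
    rw [pow_succ', mul_left_comm, map_mul, aeval_X, Module.End.mul_apply, hD, ih]
    simp only [eval_mul, eval_pow, eval_X, eval_C]
    ring

theorem eigenvalues_of_diagonal (hD : ∀ v z, D v z = e z * v z) :
    {μ : K | ∃ v : ι →₀ K, v ≠ 0 ∧ D v = μ • v} = Set.range e := by
  ext μ
  constructor
  · rintro ⟨v, hv0, hDv⟩
    obtain ⟨z, hz⟩ := Finsupp.ne_iff.mp hv0
    have hμ : e z * v z = μ * v z := by rw [← hD, hDv, Finsupp.smul_apply, smul_eq_mul]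
    exact ⟨z, mul_right_cancel₀ hz hμ⟩
  · rintro ⟨z, rfl⟩
    classical
    refine ⟨single z 1, single_ne_zero.mpr one_ne_zero, Finsupp.ext fun y => ?_⟩
    rw [hD, Finsupp.smul_apply, smul_eq_mul, single_apply]
    split_ifs with h <;> simp [h]

theorem exists_single_mem_of_diagonal (hD : ∀ v z, D v z = e z * v z) (he : Function.Injective e)
    {S : Submodule K (ι →₀ K)} (hS : ∀ v ∈ S, D v ∈ S) (hS0 : S ≠ ⊥) :
    ∃ y, single y (1 : K) ∈ S := by
  classical
  obtain ⟨v, hvS, hv0⟩ := Submodule.exists_mem_ne_zero_of_ne_bot hS0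
  obtain ⟨y, hy⟩ := Finsupp.ne_iff.mp hv0
  let p : K[X] := ∏ z ∈ v.support.erase y, (X - C (e z))
  have hpz : ∀ z ∈ v.support.erase y, p.eval (e z) = 0 := fun z hz => by
    rw [eval_prod]; exact Finset.prod_eq_zero hz (by simp)
  have hpy : p.eval (e y) ≠ 0 := by
    rw [eval_prod, Finset.prod_ne_zero_iff]
    intro z hz
    simpa [sub_eq_zero] using fun h => (Finset.ne_of_mem_erase hz) (he h).symm
  have hw : aeval D p v = single y (p.eval (e y) * v y) := by
    ext z
    rw [aeval_apply_of_diagonal hD, single_apply]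
    split_ifs with hyz
    · rw [hyz]
    · by_cases hz : v z = 0
      · rw [hz, mul_zero]
      · rw [hpz z (Finset.mem_erase.mpr ⟨Ne.symm hyz, mem_support_iff.mpr hz⟩), zero_mul]
  have hwS : aeval D p v ∈ S := Polynomial.aeval_apply_smul_mem_of_le_comap hvS p D hS
  refine ⟨y, ?_⟩
  have := S.smul_mem (p.eval (e y) * v y)⁻¹ hwS
  rwa [hw, smul_single, smul_eq_mul, inv_mul_cancel₀ (mul_ne_zero hpy hy)] at this

end Diagonal

theorem AddSubgroup.infinite_of_ne_bot {M : Type*} [AddGroup M] [IsAddTorsionFree M]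
    {H : AddSubgroup M} (hH : H ≠ ⊥) : (H : Set M).Infinite := by
  obtain ⟨g, hg0⟩ := AddSubgroup.ne_bot_iff_exists_ne_zero.mp hH
  have hg : (AddSubgroup.zmultiples (g : M) : Set M).Infinite := by
    rw [infinite_zmultiples, isOfFinAddOrder_iff_eq_zero]
    exact_mod_cast hg0
  exact hg.mono (AddSubgroup.zmultiples_le_of_mem g.2)

section IntermediateSeries

variable (G : AddSubgroup ℂ) (α β : ℂ)

theorem dActL_single (x y : G) (c : ℂ) :
    dActL G α β x (single y c) = (c * (α + y + x * β)) • single (x + y) 1 := by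
  rw [dActL, lsum_single, LinearMap.toSpanSingleton_apply, smul_smul]

theorem dActL_zero_apply (v : G →₀ ℂ) (z : G) : dActL G α β 0 v z = (α + z) * v z := by
  classical
  induction v using Finsupp.induction_linear with
  | zero => simp
  | add v w hv hw => rw [map_add, Finsupp.add_apply, Finsupp.add_apply, hv, hw, mul_add]
  | single y c =>
    rw [dActL_single, zero_add, Finsupp.smul_apply, smul_eq_mul, single_apply, single_apply]
    split_ifs with h <;> simp [h, mul_comm]

variable {G α β}

theorem single_mem_of_dActL_invariant {S : Submodule ℂ (G →₀ ℂ)}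
    (hS : ∀ x : G, ∀ v ∈ S, dActL G α β x v ∈ S) {a b : G} (ha : single a (1 : ℂ) ∈ S)
    (hab : α + a + (b - a) * β ≠ 0) : single b (1 : ℂ) ∈ S := by
  have := S.smul_mem (α + a + (b - a) * β)⁻¹ (hS (b - a) _ ha)
  rwa [dActL_single, sub_add_cancel, one_mul, AddSubgroup.coe_sub, smul_smul,
    inv_mul_cancel₀ hab, one_smul] at this

theorem exists_two_step_dActL (hG : G ≠ ⊥) (h : (β ≠ 0 ∧ β ≠ 1) ∨ α ∉ G) (y z : G) :
    ∃ w : G, α + y + (w - y) * β ≠ 0 ∧ α + w + (z - w) * β ≠ 0 := by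
  by_cases hβ : β ≠ 0 ∧ β ≠ 1
  · obtain ⟨hβ0, hβ1⟩ := hβ
    have hβ1' : β - 1 ≠ 0 := sub_ne_zero.mpr hβ1
    obtain ⟨w, hwG, hw⟩ := (AddSubgroup.infinite_of_ne_bot hG).exists_notMem_finset
      {(y : ℂ) - (α + y) / β, (α + z * β) / (β - 1)}
    simp only [Finset.mem_insert, Finset.mem_singleton, not_or] at hw
    refine ⟨⟨w, hwG⟩, fun h0 => hw.1 ?_, fun h0 => hw.2 ?_⟩
    · field_simp
      linear_combination h0
    · field_simp
      linear_combination -h0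
  · have hα : α ∉ G := h.resolve_left hβ
    have hα_add (x : G) : α + x ≠ 0 := fun h0 =>
      hα (by rw [eq_neg_of_add_eq_zero_left h0]; exact neg_mem x.2)
    rcases not_and_or.mp hβ with hβ0 | hβ1
    · exact ⟨z, by simpa [not_not.mp hβ0] using hα_add y, by simpa using hα_add z⟩
    · exact ⟨y, by simpa using hα_add y, by simpa [not_not.mp hβ1] using hα_add z⟩

end IntermediateSeries

/-- if `β ∉ {0,1}` or `α ∉ G`, the intermediate series module `V(α,β,G)` is
irreducible and its support (the set of `d₀`-eigenvalues) is `α + G`. -/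
theorem intermediate_series_irreducible (G : AddSubgroup ℂ) (hG : G ≠ ⊥) (α β : ℂ)
    (h : (β ≠ 0 ∧ β ≠ 1) ∨ α ∉ G) :
    (∀ S : Submodule ℂ (↥G →₀ ℂ),
        (∀ x : ↥G, ∀ v ∈ S, dActL G α β x v ∈ S) → S = ⊥ ∨ S = ⊤) ∧
    {μ : ℂ | ∃ v : ↥G →₀ ℂ, v ≠ 0 ∧ dActL G α β 0 v = μ • v} =
      {μ : ℂ | ∃ y : ↥G, μ = α + y} := by
  have hD := dActL_zero_apply G α β
  have he : Function.Injective fun z : G => α + z := fun _ _ hz =>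
    Subtype.ext (add_left_cancel hz)
  refine ⟨fun S hS => or_iff_not_imp_left.mpr fun hS0 => ?_, ?_⟩
  · obtain ⟨y, hy⟩ := exists_single_mem_of_diagonal hD he (hS 0) hS0
    have hsingle (z : G) : single z (1 : ℂ) ∈ S := by
      obtain ⟨w, hyw, hwz⟩ := exists_two_step_dActL hG h y z
      exact single_mem_of_dActL_invariant hS (single_mem_of_dActL_invariant hS hy hyw) hwz
    rw [eq_top_iff, ← Finsupp.basisSingleOne.span_eq, Submodule.span_le]
    rintro _ ⟨z, rfl⟩
    simpa using hsingle z
  · rw [eigenvalues_of_diagonal hD]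
    ext μ
    exact exists_congr fun _ => eq_comm
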